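/- arXiv:1604.04091 — 2 statements merged into one kernel-verified Lean document; each statement's English description precedes it below -/
import Mathlib

section
/- Let ε ∈ (0,1), r₀ ∈ (0,1], N a positive integer, and 1 ≥ r₀ > r₁ > … > r_N > 0 with N·ε·r₀ ≤ 1. Let Θ = (1 − N·ε·r₀)/r₀ and μ = Σ_{j=1}^N ε·H¹|_{E_j} + Θ·H¹|_H with E_j = [0,r₀] × {r_j} and H = [0,r₀] × {0}. Then for every H¹-measurable set Γ ⊂ ℝ² with H¹(Γ) ≤ 1 we have μ(Γ) ≤ ε + (1 − N·ε·r₀). In particular, if N·ε·r₀ = 1 − ε then μ(Γ) ≤ 2ε. -/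
open MeasureTheory Metric

/-- The horizontal segment `[0, r₀] × {y}` in the plane. -/
def seg (r₀ y : ℝ) : Set (EuclideanSpace ℝ (Fin 2)) :=
  {p | p 0 ∈ Set.Icc 0 r₀ ∧ p 1 = y}

/-- The measure `μ = Σ_{j=1}^N ε·H¹|_{E_j} + Θ·H¹|_H`. -/
noncomputable def nuMeas (r : ℕ → ℝ) (N : ℕ) (δ Θ : ℝ) : Measure (EuclideanSpace ℝ (Fin 2)) :=
  (∑ j ∈ Finset.Icc 1 N, ENNReal.ofReal δ • (μH[1].restrict (seg (r 0) (r j)))) +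
    ENNReal.ofReal Θ • (μH[1].restrict (seg (r 0) 0))

noncomputable def emb (y : ℝ) : ℝ → EuclideanSpace ℝ (Fin 2) :=
  fun x => (show EuclideanSpace ℝ (Fin 2) from WithLp.toLp 2 ![x, y])

lemma emb_isometry (y : ℝ) : Isometry (emb y) := by
  apply Isometry.of_dist_eq
  intro a b
  rw [EuclideanSpace.dist_eq]
  simp [emb, Fin.sum_univ_two, Real.sqrt_sq_eq_abs, Real.dist_eq]

lemma seg_eq (r₀ y : ℝ) : seg r₀ y = emb y '' Set.Icc 0 r₀ := by
  ext p
  constructor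
  · rintro ⟨h0, h1⟩
    refine ⟨p 0, h0, ?_⟩
    ext i
    fin_cases i <;> simp [emb, h1]
  · rintro ⟨x, hx, rfl⟩
    refine ⟨by simpa [emb] using hx, by simp [emb]⟩

lemma H1_seg (r₀ : ℝ) (y : ℝ) : μH[1] (seg r₀ y) = ENNReal.ofReal r₀ := by
  rw [seg_eq, (emb_isometry y).hausdorffMeasure_image (Or.inl one_pos.le),
    MeasureTheory.hausdorffMeasure_real, Real.volume_Icc, sub_zero]

lemma seg_meas (r₀ y : ℝ) : MeasurableSet (seg r₀ y) := by
  rw [seg_eq]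
  exact (isCompact_Icc.image (emb_isometry y).continuous).isClosed.measurableSet

/-- For the auxiliary measure with mass `1` and density `ε`, any `H¹`-measurable set `Γ`
with `H¹(Γ) ≤ 1` has `μ(Γ) ≤ ε + (1 - N·ε·r₀)`; if moreover `N·ε·r₀ = 1 - ε` then
`μ(Γ) ≤ 2ε`. -/
theorem stmt_2 (ε : ℝ) (hε : ε ∈ Set.Ioo (0 : ℝ) 1) (r : ℕ → ℝ) (N : ℕ) (hN : 0 < N)
    (hr₀ : r 0 ≤ 1) (hpos : ∀ j ≤ N, 0 < r j) (hdec : ∀ j < N, r (j + 1) < r j)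
    (hmass : (N : ℝ) * ε * r 0 ≤ 1) (Θ : ℝ) (hΘ : Θ = (1 - N * ε * r 0) / r 0)
    (Γ : Set (EuclideanSpace ℝ (Fin 2))) (hΓmeas : MeasurableSet Γ)
    (hΓ : μH[1] Γ ≤ 1) :
    nuMeas r N ε Θ Γ ≤ ENNReal.ofReal (ε + (1 - N * ε * r 0)) ∧
    ((N : ℝ) * ε * r 0 = 1 - ε → nuMeas r N ε Θ Γ ≤ ENNReal.ofReal (2 * ε)) := by
  have hr0 : 0 < r 0 := hpos 0 (Nat.zero_le N)
  -- strict antitonicity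
  have hanti : ∀ j ≤ N, ∀ i < j, r j < r i := by
    intro j hj
    induction j with
    | zero => intro i hi; omega
    | succ k ih =>
      intro i hi
      have hk : r (k + 1) < r k := hdec k (by omega)
      rcases Nat.lt_succ_iff_lt_or_eq.mp hi with h | h
      · exact hk.trans (ih (by omega) i h)
      · subst h; exact hk
  -- pairwise disjointness
  have hdisj : (↑(Finset.Icc 1 N) : Set ℕ).PairwiseDisjoint
      (fun j => Γ ∩ seg (r 0) (r j)) := by
    intro i hi j hj hij
    simp only [Finset.coe_Icc, Set.mem_Icc] at hi hj
    refine Set.disjoint_left.mpr ?_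
    rintro p ⟨-, -, hp⟩ ⟨-, -, hq⟩
    have : r i = r j := hp ▸ hq ▸ rfl
    rcases hij.lt_or_gt with h | h
    · exact absurd this (hanti j hj.2 i h).ne'
    · exact absurd this (hanti i hi.2 j h).ne
  have hmeas : ∀ j ∈ Finset.Icc 1 N, MeasurableSet (Γ ∩ seg (r 0) (r j)) :=
    fun j _ => hΓmeas.inter (seg_meas _ _)
  have key1 : ∑ j ∈ Finset.Icc 1 N, μH[1] (Γ ∩ seg (r 0) (r j)) ≤ 1 := by
    calc ∑ j ∈ Finset.Icc 1 N, μH[1] (Γ ∩ seg (r 0) (r j))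
        = μH[1] (⋃ j ∈ Finset.Icc 1 N, Γ ∩ seg (r 0) (r j)) :=
          (measure_biUnion_finset hdisj hmeas).symm
      _ ≤ μH[1] Γ := measure_mono (Set.iUnion₂_subset fun _ _ => Set.inter_subset_left)
      _ ≤ 1 := hΓ
  have key2 : μH[1] (Γ ∩ seg (r 0) 0) ≤ ENNReal.ofReal (r 0) := by
    rw [← H1_seg (r 0) 0]
    exact measure_mono Set.inter_subset_right
  have happ : nuMeas r N ε Θ Γ =
      (∑ j ∈ Finset.Icc 1 N, ENNReal.ofReal ε * μH[1] (Γ ∩ seg (r 0) (r j))) +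
        ENNReal.ofReal Θ * μH[1] (Γ ∩ seg (r 0) 0) := by
    simp only [nuMeas, Measure.coe_add, Pi.add_apply, Measure.coe_smul, Pi.smul_apply,
      smul_eq_mul, Measure.restrict_apply hΓmeas]
    rw [show ((∑ j ∈ Finset.Icc 1 N, ENNReal.ofReal ε •
        (μH[1].restrict (seg (r 0) (r j)))) : Measure _) Γ
      = ∑ j ∈ Finset.Icc 1 N, (ENNReal.ofReal ε •
        (μH[1].restrict (seg (r 0) (r j)))) Γ from by
        rw [Measure.coe_finset_sum]; simp]
    simp [Measure.restrict_apply hΓmeas]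
  have hΘ0 : 0 ≤ Θ := by
    rw [hΘ]
    exact div_nonneg (by linarith) hr0.le
  have hbound : nuMeas r N ε Θ Γ ≤ ENNReal.ofReal (ε + (1 - N * ε * r 0)) := by
    rw [happ]
    have h1 : (∑ j ∈ Finset.Icc 1 N, ENNReal.ofReal ε * μH[1] (Γ ∩ seg (r 0) (r j)))
        ≤ ENNReal.ofReal ε := by
      rw [← Finset.mul_sum]
      calc ENNReal.ofReal ε * ∑ j ∈ Finset.Icc 1 N, μH[1] (Γ ∩ seg (r 0) (r j))
          ≤ ENNReal.ofReal ε * 1 := mul_le_mul_right key1 _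
        _ = ENNReal.ofReal ε := mul_one _
    have h2 : ENNReal.ofReal Θ * μH[1] (Γ ∩ seg (r 0) 0)
        ≤ ENNReal.ofReal (1 - N * ε * r 0) := by
      calc ENNReal.ofReal Θ * μH[1] (Γ ∩ seg (r 0) 0)
          ≤ ENNReal.ofReal Θ * ENNReal.ofReal (r 0) := mul_le_mul_right key2 _
        _ = ENNReal.ofReal (Θ * r 0) := (ENNReal.ofReal_mul hΘ0).symm
        _ = ENNReal.ofReal (1 - N * ε * r 0) := by
            rw [hΘ, div_mul_cancel₀ _ hr0.ne']
    calc _ ≤ ENNReal.ofReal ε + ENNReal.ofReal (1 - N * ε * r 0) := add_le_add h1 h2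
      _ = ENNReal.ofReal (ε + (1 - N * ε * r 0)) :=
          (ENNReal.ofReal_add hε.1.le (by linarith)).symm
  refine ⟨hbound, fun h => ?_⟩
  calc nuMeas r N ε Θ Γ ≤ ENNReal.ofReal (ε + (1 - N * ε * r 0)) := hbound
    _ = ENNReal.ofReal (2 * ε) := by rw [h]; ring_nf
end

section
/- Let ε ∈ (0,1), r₀ = ε³, N = (1−ε)/(ε·r₀) (assumed an integer), Θ = ε/r₀, and let μ = Σ_{j=1}^N ε·H¹|_{E_j} + Θ·H¹|_H with E_j = [0,r₀] × {r_j}, H = [0,r₀] × {0}, where (r_j) satisfies r_{j+1} ≤ r_j/2 and r₀ > r₁. Then for x ∈ H and r ≥ r₀, one has μ(B(x,r)) ≥ Θ·r₀ = ε and β_{2,μ}(B(x,r))² ≤ C·ε·r₀³/r² for an absolute constant C; consequently ∫_{r₀}^∞ β_{2,μ}(B(x,r))² dr/μ(B(x,r)) ≤ C'·r₀² = C'·ε⁶ for an absolute constant C'. -/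
open MeasureTheory Metric

/-- The `L²` beta-number (squared) of a set `B` with respect to a measure `μ`. -/
noncomputable def beta2sq (μ : Measure (EuclideanSpace ℝ (Fin 2)))
    (B : Set (EuclideanSpace ℝ (Fin 2))) : ℝ :=
  sInf {v : ℝ | ∃ a b : EuclideanSpace ℝ (Fin 2), a ≠ b ∧
    v = (1 / (μ B).toReal) *
      ∫ y in B, (Metric.infDist y (affineSpan ℝ ({a, b} : Set (EuclideanSpace ℝ (Fin 2))) :
        Set (EuclideanSpace ℝ (Fin 2))) / Metric.diam B) ^ 2 ∂μ}

/-! Since `ρ ≥ r₀` and `x ∈ H`, the ball `B(x, ρ)` contains `H` up to its endpoints and a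
subsegment of length `3 r₀ / 5` of every `E_j`, so `μ(B) ≥ Θ r₀ = ε` and `μ(B) ≥ 3/5`. Testing
`β` with the line `ℝ × {0}` carrying `H`, the strip `E_j` contributes at most `ε r₀ (r_j / 2ρ)²`,
and `r_j ≤ 2⁻ʲ r₀` sums this to at most `ε r₀³ / (12 ρ²)`; dividing by `μ(B) ≥ 3/5` gives
`β² ≤ ε r₀³ / ρ²`. Dividing once more, by `μ(B) ≥ ε`, leaves `r₀³ / ρ²`, whose integral over
`(r₀, ∞)` is `r₀² = ε⁶`. -/

open scoped ENNReal

local notation "ℝ²" => EuclideanSpace ℝ (Fin 2)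

lemma EuclideanSpace.dist_eq_fin_two (p q : ℝ²) :
    dist p q = √((p 0 - q 0) ^ 2 + (p 1 - q 1) ^ 2) := by
  simp [EuclideanSpace.dist_eq, Fin.sum_univ_two, Real.dist_eq, sq_abs]

lemma mem_ball_of_sq_add_sq_lt {p x : ℝ²} {ρ : ℝ} (hρ : 0 ≤ ρ)
    (h : (p 0 - x 0) ^ 2 + (p 1 - x 1) ^ 2 < ρ ^ 2) : p ∈ ball x ρ := by
  rw [mem_ball, EuclideanSpace.dist_eq_fin_two, ← Real.sqrt_sq hρ]
  exact Real.sqrt_lt_sqrt (by positivity) h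

lemma isometry_horizontal (u : ℝ) : Isometry (fun t : ℝ => !₂[t, u]) :=
  Isometry.of_dist_eq fun a b => by
    simp [EuclideanSpace.dist_eq_fin_two, Real.dist_eq, Real.sqrt_sq_eq_abs]

lemma hausdorffMeasure_horizontal (u : ℝ) (s : Set ℝ) :
    μH[1] {p : ℝ² | p 0 ∈ s ∧ p 1 = u} = volume s := by
  have himage : (fun t : ℝ => !₂[t, u]) '' s = {p | p 0 ∈ s ∧ p 1 = u} := by
    ext p
    constructor
    · rintro ⟨t, ht, rfl⟩
      simpa using ht
    · rintro ⟨h0, rfl⟩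
      exact ⟨p 0, h0, by ext i; fin_cases i <;> simp⟩
  rw [← himage, (isometry_horizontal u).hausdorffMeasure_image (Or.inl zero_le_one),
    hausdorffMeasure_real]

lemma hausdorffMeasure_seg (r₀ u : ℝ) : μH[1] (seg r₀ u) = ENNReal.ofReal r₀ := by
  rw [seg, hausdorffMeasure_horizontal, Real.volume_Icc, sub_zero]

lemma ofReal_le_hausdorffMeasure_ball_inter_seg_zero {r₀ ρ : ℝ} {x : ℝ²} (hx : x ∈ seg r₀ 0)
    (hρ : r₀ ≤ ρ) : ENNReal.ofReal r₀ ≤ μH[1] (ball x ρ ∩ seg r₀ 0) := by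
  obtain ⟨⟨hx0, hx0'⟩, hx1⟩ := hx
  have hsub : {p : ℝ² | p 0 ∈ Set.Ioo 0 r₀ ∧ p 1 = 0} ⊆ ball x ρ ∩ seg r₀ 0 := by
    rintro p ⟨⟨hp0, hp0'⟩, hp1⟩
    refine ⟨mem_ball_of_sq_add_sq_lt (by linarith) ?_, ⟨hp0.le, hp0'.le⟩, hp1⟩
    rw [hp1, hx1]
    nlinarith
  calc ENNReal.ofReal r₀ = μH[1] {p : ℝ² | p 0 ∈ Set.Ioo 0 r₀ ∧ p 1 = 0} := by
        rw [hausdorffMeasure_horizontal, Real.volume_Ioo, sub_zero]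
    _ ≤ _ := measure_mono hsub

-- Points of height at most `ρ / 2` within horizontal distance `4 ρ / 5` of `x` lie in the ball,
-- since `(4/5)² + (1/2)² < 1`.
lemma ofReal_le_hausdorffMeasure_ball_inter_seg {r₀ ρ u : ℝ} {x : ℝ²} (hx : x ∈ seg r₀ 0)
    (hρ : r₀ ≤ ρ) (hu : |u| ≤ ρ / 2) :
    ENNReal.ofReal (3 / 5 * r₀) ≤ μH[1] (ball x ρ ∩ seg r₀ u) := by
  obtain ⟨⟨hx0, hx0'⟩, hx1⟩ := hx
  obtain ⟨hu, hu'⟩ := abs_le.mp hu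
  set a := max 0 (x 0 - 4 / 5 * ρ)
  set b := min r₀ (x 0 + 4 / 5 * ρ)
  have hsub : {p : ℝ² | p 0 ∈ Set.Ioo a b ∧ p 1 = u} ⊆ ball x ρ ∩ seg r₀ u := by
    rintro p ⟨⟨hpa, hpb⟩, hp1⟩
    have h1 : x 0 - 4 / 5 * ρ < p 0 := (le_max_right _ _).trans_lt hpa
    have h2 : p 0 < x 0 + 4 / 5 * ρ := hpb.trans_le (min_le_right _ _)
    refine ⟨mem_ball_of_sq_add_sq_lt (by linarith) ?_, ⟨?_, ?_⟩, hp1⟩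
    · rw [hp1, hx1]
      nlinarith
    · exact (le_max_left _ _).trans hpa.le
    · exact hpb.le.trans (min_le_left _ _)
  calc ENNReal.ofReal (3 / 5 * r₀) ≤ ENNReal.ofReal (b - a) := by
        have ha : a ≤ 1 / 5 * r₀ := max_le (by linarith) (by linarith)
        have hb : 4 / 5 * r₀ ≤ b := le_min (by linarith) (by linarith)
        exact ENNReal.ofReal_le_ofReal (by linarith)
    _ = μH[1] {p : ℝ² | p 0 ∈ Set.Ioo a b ∧ p 1 = u} := by
        rw [hausdorffMeasure_horizontal, Real.volume_Ioo]
    _ ≤ _ := measure_mono hsub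

noncomputable def xAxis : AffineSubspace ℝ ℝ² := affineSpan ℝ {!₂[0, 0], !₂[1, 0]}

lemma infDist_xAxis_le (y : ℝ²) : infDist y xAxis ≤ |y 1| := by
  have hmem : AffineMap.lineMap !₂[0, 0] !₂[1, 0] (y 0) ∈ xAxis :=
    AffineMap.lineMap_mem_affineSpan_pair _ _ _
  refine (infDist_le_dist_of_mem hmem).trans_eq ?_
  simp [EuclideanSpace.dist_eq_fin_two, AffineMap.lineMap_apply_module, Real.sqrt_sq_eq_abs]

lemma beta2sq_nonneg (μ : Measure ℝ²) (B : Set ℝ²) : 0 ≤ beta2sq μ B := by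
  apply Real.sInf_nonneg
  rintro v ⟨a, b, -, rfl⟩
  exact mul_nonneg (by positivity) (integral_nonneg fun y => sq_nonneg _)

lemma beta2sq_le (μ : Measure ℝ²) (B : Set ℝ²) {a b : ℝ²} (hab : a ≠ b) :
    beta2sq μ B ≤ 1 / (μ B).toReal *
      ∫ y in B, (infDist y (affineSpan ℝ ({a, b} : Set ℝ²) : Set ℝ²) / diam B) ^ 2 ∂μ := by
  refine csInf_le ⟨0, ?_⟩ ⟨a, b, hab, rfl⟩
  rintro v ⟨a, b, -, rfl⟩
  exact mul_nonneg (by positivity) (integral_nonneg fun y => sq_nonneg _)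

section nuMeas

variable (r : ℕ → ℝ) (N : ℕ) (δ Θ : ℝ)

lemma setLIntegral_nuMeas (f : ℝ² → ℝ≥0∞) {S : Set ℝ²} (hS : MeasurableSet S) :
    ∫⁻ y in S, f y ∂nuMeas r N δ Θ =
      ∑ j ∈ Finset.Icc 1 N, ENNReal.ofReal δ * ∫⁻ y in S ∩ seg (r 0) (r j), f y ∂μH[1] +
        ENNReal.ofReal Θ * ∫⁻ y in S ∩ seg (r 0) 0, f y ∂μH[1] := by
  rw [← lintegral_indicator hS, nuMeas, lintegral_add_measure, lintegral_finsetSum_measure]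
  simp only [lintegral_indicator hS, Measure.restrict_smul, lintegral_smul_measure, smul_eq_mul,
    Measure.restrict_restrict hS]

lemma nuMeas_apply {S : Set ℝ²} (hS : MeasurableSet S) :
    nuMeas r N δ Θ S =
      ∑ j ∈ Finset.Icc 1 N, ENNReal.ofReal δ * μH[1] (S ∩ seg (r 0) (r j)) +
        ENNReal.ofReal Θ * μH[1] (S ∩ seg (r 0) 0) := by
  simpa only [setLIntegral_one] using setLIntegral_nuMeas r N δ Θ (fun _ => 1) hS

instance : IsFiniteMeasure (nuMeas r N δ Θ) := by
  refine ⟨?_⟩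
  rw [nuMeas_apply r N δ Θ MeasurableSet.univ]
  simp only [Set.univ_inter, hausdorffMeasure_seg, Finset.sum_const, nsmul_eq_mul]
  finiteness

end nuMeas

section nuMeasBall

variable {r : ℕ → ℝ} {N : ℕ} {δ Θ ρ : ℝ} {x : ℝ²}

lemma le_toReal_nuMeas_ball (hδ : 0 ≤ δ) (hΘ : 0 ≤ Θ) (hx : x ∈ seg (r 0) 0) (hρ : r 0 ≤ ρ)
    (hr : ∀ j ∈ Finset.Icc 1 N, |r j| ≤ ρ / 2) :
    N * δ * (3 / 5 * r 0) + Θ * r 0 ≤ (nuMeas r N δ Θ (ball x ρ)).toReal := by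
  have hr0 : 0 ≤ r 0 := hx.1.1.trans hx.1.2
  rw [← ENNReal.ofReal_le_iff_le_toReal (measure_ne_top _ _),
    nuMeas_apply r N δ Θ measurableSet_ball]
  calc ENNReal.ofReal (N * δ * (3 / 5 * r 0) + Θ * r 0)
      = ∑ _j ∈ Finset.Icc 1 N, ENNReal.ofReal δ * ENNReal.ofReal (3 / 5 * r 0) +
          ENNReal.ofReal Θ * ENNReal.ofReal (r 0) := by
        rw [Finset.sum_const, Nat.card_Icc, Nat.add_sub_cancel, nsmul_eq_mul,
          ← ENNReal.ofReal_mul hδ, ← ENNReal.ofReal_mul hΘ, ← ENNReal.ofReal_natCast,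
          ← ENNReal.ofReal_mul (Nat.cast_nonneg N),
          ← ENNReal.ofReal_add (by positivity) (by positivity), mul_assoc]
    _ ≤ _ := by
        gcongr with j hj
        · exact ofReal_le_hausdorffMeasure_ball_inter_seg hx hρ (hr j hj)
        · exact ofReal_le_hausdorffMeasure_ball_inter_seg_zero hx hρ

lemma setLIntegral_seg_infDist_xAxis_le (S : Set ℝ²) (r₀ u : ℝ) {D : ℝ} (hD : 0 ≤ D) :
    ∫⁻ y in S ∩ seg r₀ u, ENNReal.ofReal ((infDist y xAxis / D) ^ 2) ∂μH[1] ≤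
      ENNReal.ofReal ((u / D) ^ 2 * r₀) := by
  calc ∫⁻ y in S ∩ seg r₀ u, ENNReal.ofReal ((infDist y xAxis / D) ^ 2) ∂μH[1]
      ≤ ∫⁻ _y in S ∩ seg r₀ u, ENNReal.ofReal ((u / D) ^ 2) ∂μH[1] := by
        refine setLIntegral_mono measurable_const fun y hy => ?_
        have h := infDist_xAxis_le y
        rw [hy.2.2] at h
        refine ENNReal.ofReal_le_ofReal ?_
        calc (infDist y xAxis / D) ^ 2 ≤ (|u| / D) ^ 2 := by
              gcongr
              exact div_nonneg infDist_nonneg hD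
          _ = (u / D) ^ 2 := by rw [div_pow, sq_abs, div_pow]
      _ ≤ ENNReal.ofReal ((u / D) ^ 2) * μH[1] (seg r₀ u) := by
        rw [setLIntegral_const]
        gcongr
        exact Set.inter_subset_right
      _ = ENNReal.ofReal ((u / D) ^ 2 * r₀) := by
        rw [hausdorffMeasure_seg, ENNReal.ofReal_mul (sq_nonneg _)]

lemma setIntegral_nuMeas_infDist_xAxis_le (hδ : 0 ≤ δ) (hr0 : 0 ≤ r 0) {S : Set ℝ²}
    (hS : MeasurableSet S) {D : ℝ} (hD : 0 ≤ D) :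
    ∫ y in S, (infDist y xAxis / D) ^ 2 ∂nuMeas r N δ Θ ≤
      δ * r 0 * ∑ j ∈ Finset.Icc 1 N, (r j / D) ^ 2 := by
  have hcont : Continuous fun y : ℝ² => (infDist y xAxis / D) ^ 2 :=
    ((continuous_infDist_pt _).div_const D).pow 2
  rw [integral_eq_lintegral_of_nonneg_ae (ae_of_all _ fun y => sq_nonneg _)
    hcont.aestronglyMeasurable]
  refine ENNReal.toReal_le_of_le_ofReal (by positivity) ?_
  calc ∫⁻ y in S, ENNReal.ofReal ((infDist y xAxis / D) ^ 2) ∂nuMeas r N δ Θ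
      ≤ ∑ j ∈ Finset.Icc 1 N, ENNReal.ofReal δ * ENNReal.ofReal ((r j / D) ^ 2 * r 0) +
          ENNReal.ofReal Θ * ENNReal.ofReal ((0 / D) ^ 2 * r 0) := by
        rw [setLIntegral_nuMeas r N δ Θ _ hS]
        gcongr <;> exact setLIntegral_seg_infDist_xAxis_le S _ _ hD
    _ = ENNReal.ofReal (δ * r 0 * ∑ j ∈ Finset.Icc 1 N, (r j / D) ^ 2) := by
        simp only [zero_div, zero_pow two_ne_zero, zero_mul, ENNReal.ofReal_zero, mul_zero,
          add_zero, Finset.mul_sum]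
        rw [ENNReal.ofReal_sum_of_nonneg fun j _ => by positivity]
        refine Finset.sum_congr rfl fun j _ => ?_
        rw [← ENNReal.ofReal_mul hδ]
        ring_nf

lemma beta2sq_nuMeas_ball_le (hδ : 0 ≤ δ) (hr0 : 0 ≤ r 0) (hρ : 0 ≤ ρ) :
    beta2sq (nuMeas r N δ Θ) (ball x ρ) ≤
      δ * r 0 * (∑ j ∈ Finset.Icc 1 N, r j ^ 2) /
        (4 * ρ ^ 2 * (nuMeas r N δ Θ (ball x ρ)).toReal) := by
  have hab : (!₂[0, 0] : ℝ²) ≠ !₂[1, 0] := fun h => by simpa using congrArg (· 0) h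
  refine (beta2sq_le _ _ hab).trans ?_
  rw [diam_ball_eq x hρ]
  calc 1 / (nuMeas r N δ Θ (ball x ρ)).toReal *
        ∫ y in ball x ρ, (infDist y xAxis / (2 * ρ)) ^ 2 ∂nuMeas r N δ Θ
      ≤ 1 / (nuMeas r N δ Θ (ball x ρ)).toReal *
          (δ * r 0 * ∑ j ∈ Finset.Icc 1 N, (r j / (2 * ρ)) ^ 2) := by
        gcongr
        exact setIntegral_nuMeas_infDist_xAxis_le hδ hr0 measurableSet_ball (by positivity)
    _ = _ := by
        simp only [div_pow, ← Finset.sum_div]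
        field_simp
        ring

end nuMeasBall

lemma le_div_two_pow_of_le_half {r : ℕ → ℝ} {N : ℕ} (h : ∀ j < N, r (j + 1) ≤ r j / 2) :
    ∀ j ≤ N, r j ≤ r 0 / 2 ^ j
  | 0, _ => by simp
  | j + 1, hj => by
    have ih := le_div_two_pow_of_le_half h j (by omega)
    calc r (j + 1) ≤ r j / 2 := h j hj
      _ ≤ r 0 / 2 ^ j / 2 := by gcongr
      _ = r 0 / 2 ^ (j + 1) := by rw [pow_succ, div_div]

lemma sum_sq_le_of_le_half {r : ℕ → ℝ} {N : ℕ} (hr : ∀ j ≤ N, 0 ≤ r j)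
    (h : ∀ j < N, r (j + 1) ≤ r j / 2) :
    ∑ j ∈ Finset.Icc 1 N, r j ^ 2 ≤ r 0 ^ 2 / 3 := by
  calc ∑ j ∈ Finset.Icc 1 N, r j ^ 2 ≤ ∑ j ∈ Finset.Icc 1 N, r 0 ^ 2 * (1 / 4) ^ j := by
        refine Finset.sum_le_sum fun j hj => ?_
        have hjN := (Finset.mem_Icc.mp hj).2
        calc r j ^ 2 ≤ (r 0 / 2 ^ j) ^ 2 :=
              pow_le_pow_left₀ (hr j hjN) (le_div_two_pow_of_le_half h j hjN) 2
          _ = r 0 ^ 2 * (1 / 4) ^ j := by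
              rw [div_pow, ← pow_mul, mul_comm j 2, pow_mul, one_div, inv_pow, div_eq_mul_inv]
              norm_num
    _ = r 0 ^ 2 * ∑ j ∈ Finset.Ico 1 (N + 1), (1 / 4 : ℝ) ^ j := by
        rw [Finset.Ico_add_one_right_eq_Icc, Finset.mul_sum]
    _ ≤ r 0 ^ 2 * ((1 / 4) ^ 1 / (1 - 1 / 4)) := by
        gcongr
        exact geom_sum_Ico_le_of_lt_one (by norm_num) (by norm_num)
    _ = r 0 ^ 2 / 3 := by ring

lemma abs_le_half_of_le_half {r : ℕ → ℝ} {N : ℕ} (hr : ∀ j ≤ N, 0 < r j)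
    (h : ∀ j < N, r (j + 1) ≤ r j / 2) :
    ∀ j ∈ Finset.Icc 1 N, |r j| ≤ r 0 / 2 := fun j hj => by
  obtain ⟨hj1, hjN⟩ := Finset.mem_Icc.mp hj
  rw [abs_of_pos (hr j hjN)]
  calc r j ≤ r 0 / 2 ^ j := le_div_two_pow_of_le_half h j hjN
    _ ≤ r 0 / 2 ^ 1 := by gcongr <;> linarith [hr 0 (Nat.zero_le N)]
    _ = r 0 / 2 := by rw [pow_one]

lemma setIntegral_Ioi_le_of_le_div_sq {f : ℝ → ℝ} {c K : ℝ} (hc : 0 < c)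
    (hf : ∀ ρ, 0 ≤ f ρ) (hfK : ∀ ρ > c, f ρ ≤ K / ρ ^ 2) :
    ∫ ρ in Set.Ioi c, f ρ ≤ K / c := by
  have hpow : ∀ ρ > c, K / ρ ^ 2 = K * ρ ^ (-2 : ℝ) := fun ρ hρ => by
    rw [Real.rpow_neg (hc.trans hρ).le, Real.rpow_two, div_eq_mul_inv]
  calc ∫ ρ in Set.Ioi c, f ρ ≤ ∫ ρ in Set.Ioi c, K * ρ ^ (-2 : ℝ) := by
        refine integral_mono_of_nonneg (ae_of_all _ hf)
          ((integrableOn_Ioi_rpow_of_lt (by norm_num) hc).const_mul K) ?_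
        filter_upwards [self_mem_ae_restrict measurableSet_Ioi] with ρ hρ
        exact (hfK ρ hρ).trans_eq (hpow ρ hρ)
    _ = K / c := by
        rw [integral_const_mul, integral_Ioi_rpow_of_lt (by norm_num) hc]
        norm_num [Real.rpow_neg_one, div_eq_mul_inv]

section configuration

variable {ε Θ ρ : ℝ} {N : ℕ} {r : ℕ → ℝ} {x : ℝ²}

lemma max_le_toReal_nuMeas_ball (hε : 0 < ε) (hr0 : 0 < r 0) (hNε : N * ε * r 0 = 1 - ε)
    (hΘ : Θ = ε / r 0) (hr : ∀ j ≤ N, 0 < r j) (h : ∀ j < N, r (j + 1) ≤ r j / 2)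
    (hx : x ∈ seg (r 0) 0) (hρ : r 0 ≤ ρ) :
    max (3 / 5) ε ≤ (nuMeas r N ε Θ (ball x ρ)).toReal := by
  have hΘ0 : 0 ≤ Θ := by rw [hΘ]; positivity
  have hΘr : Θ * r 0 = ε := by rw [hΘ, div_mul_cancel₀ _ hr0.ne']
  have hstrips : (N : ℝ) * ε * (3 / 5 * r 0) = 3 / 5 * (1 - ε) := by rw [← hNε]; ring
  have hε1 : 0 ≤ 1 - ε := by rw [← hNε]; positivity
  have hmass := le_toReal_nuMeas_ball hε.le hΘ0 hx hρ
    fun j hj => (abs_le_half_of_le_half hr h j hj).trans (by linarith)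
  rw [hstrips, hΘr] at hmass
  exact max_le (by linarith) (by linarith)

lemma beta2sq_nuMeas_ball_le_of_three_fifths_le (hε : 0 < ε) (hr0 : 0 < r 0)
    (hr : ∀ j ≤ N, 0 < r j) (h : ∀ j < N, r (j + 1) ≤ r j / 2) (hρ : r 0 ≤ ρ)
    (hμ : 3 / 5 ≤ (nuMeas r N ε Θ (ball x ρ)).toReal) :
    beta2sq (nuMeas r N ε Θ) (ball x ρ) ≤ ε * r 0 ^ 3 / ρ ^ 2 := by
  have hρ0 : 0 < ρ := hr0.trans_le hρ
  have hsum := sum_sq_le_of_le_half (fun j hj => (hr j hj).le) h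
  calc beta2sq (nuMeas r N ε Θ) (ball x ρ)
      ≤ ε * r 0 * (∑ j ∈ Finset.Icc 1 N, r j ^ 2) /
          (4 * ρ ^ 2 * (nuMeas r N ε Θ (ball x ρ)).toReal) :=
        beta2sq_nuMeas_ball_le hε.le hr0.le hρ0.le
    _ ≤ ε * r 0 * (r 0 ^ 2 / 3) / (4 * ρ ^ 2 * (3 / 5)) := by gcongr
    _ = 5 / 36 * (ε * r 0 ^ 3 / ρ ^ 2) := by field_simp; ring
    _ ≤ ε * r 0 ^ 3 / ρ ^ 2 := by
        have : 0 ≤ ε * r 0 ^ 3 / ρ ^ 2 := by positivity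
        linarith

end configuration

/-- For the measure of Theorem 1.3 (`r₀ = ε³`, `N·ε·r₀ = 1-ε`, `Θ = ε/r₀`): for `x ∈ H` and
`ρ ≥ r₀` one has `μ(B(x,ρ)) ≥ ε` and `β² ≤ C·ε·r₀³/ρ²`, and consequently
`∫_{r₀}^∞ β²(B(x,ρ)) dρ/μ(B(x,ρ)) ≤ C'·ε⁶`, for absolute constants `C, C'`. -/
theorem stmt_13 : ∃ C C' : ℝ, 0 < C ∧ 0 < C' ∧
    ∀ (ε : ℝ) (_ : ε ∈ Set.Ioo (0 : ℝ) 1) (N : ℕ) (r : ℕ → ℝ) (Θ : ℝ),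
      r 0 = ε ^ 3 → (N : ℝ) * ε * r 0 = 1 - ε → Θ = ε / r 0 →
      (∀ j ≤ N, 0 < r j) → (∀ j < N, r (j + 1) ≤ r j / 2) →
      ∀ x ∈ seg (r 0) 0,
        (∀ ρ : ℝ, r 0 ≤ ρ →
          ENNReal.ofReal ε ≤ nuMeas r N ε Θ (Metric.ball x ρ) ∧
          beta2sq (nuMeas r N ε Θ) (Metric.ball x ρ) ≤ C * ε * (r 0) ^ 3 / ρ ^ 2) ∧
        ∫ ρ in Set.Ioi (r 0),
            beta2sq (nuMeas r N ε Θ) (Metric.ball x ρ) /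
              (nuMeas r N ε Θ (Metric.ball x ρ)).toReal ≤ C' * ε ^ 6 := by
  refine ⟨1, 1, one_pos, one_pos, ?_⟩
  rintro ε ⟨hε0, -⟩ N r Θ hr0 hNε hΘ hr hstep x hx
  have hr0pos : 0 < r 0 := hr0 ▸ pow_pos hε0 3
  have hmass ρ (hρ : r 0 ≤ ρ) := max_le_toReal_nuMeas_ball hε0 hr0pos hNε hΘ hr hstep hx hρ
  have hbeta ρ (hρ : r 0 ≤ ρ) := beta2sq_nuMeas_ball_le_of_three_fifths_le hε0 hr0pos hr hstep hρ
    (le_of_max_le_left (hmass ρ hρ))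
  refine ⟨fun ρ hρ => ⟨?_, by simpa using hbeta ρ hρ⟩, ?_⟩
  · exact (ENNReal.ofReal_le_iff_le_toReal (measure_ne_top _ _)).mpr
      (le_of_max_le_right (hmass ρ hρ))
  · calc _ ≤ r 0 ^ 3 / r 0 := by
          refine setIntegral_Ioi_le_of_le_div_sq hr0pos
            (fun ρ => div_nonneg (beta2sq_nonneg _ _) ENNReal.toReal_nonneg) fun ρ hρ => ?_
          calc _ ≤ ε * r 0 ^ 3 / ρ ^ 2 / ε :=
                div_le_div₀ (by positivity) (hbeta ρ hρ.le) hε0 (le_of_max_le_right (hmass ρ hρ.le))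
            _ = r 0 ^ 3 / ρ ^ 2 := by field_simp
      _ = 1 * ε ^ 6 := by rw [hr0]; field_simp
end
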